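/- Let C, B, C_κ > 0 with B > C_κ, and let E : [τ, t_final] → ℝ be a continuous nonnegative function satisfying E(t) ≤ C·exp(−B·t) + C_κ·∫_t^{t_final} E(s) ds for all t ∈ [τ, t_final]. Then E(τ) ≤ C·(1 + C_κ/(B − C_κ))·exp(−B·τ). -/

import Mathlib

/-!
Write `φ t = ∫ s in t..b, E s`. The hypothesis `E ≤ f + K φ` says `-φ' ≤ f + K φ`, so
`t ↦ exp (K (t - a)) φ t - ∫ s in t..b, exp (K (s - a)) f s` is nondecreasing on `[a, b]`.
Comparing its values at `a` and at `b` (where it vanishes) bounds `φ a` by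
`∫ s in a..b, exp (K (s - a)) f s`, which for `f s = C exp (-B s)` and `K < B` is at most
`C / (B - K) * exp (-B a)`. Inserting this into the hypothesis at `t = a` gives the claim.
-/

open MeasureTheory Real Set

section
variable {E : ℝ → ℝ} {a b : ℝ}

theorem ContinuousOn.continuousOn_integral_left (hE : ContinuousOn E (Icc a b)) :
    ContinuousOn (fun t => ∫ s in t..b, E s) (Icc a b) := by
  rcases le_or_gt a b with hab | hba
  · rw [← uIcc_of_le hab] at hE ⊢
    exact intervalIntegral.continuousOn_primitive_interval_left hE.integrableOn_Icc
  · simp [Icc_eq_empty_of_lt hba]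

theorem ContinuousOn.hasDerivAt_integral_left (hE : ContinuousOn E (Icc a b)) {t : ℝ}
    (ht : t ∈ Ioo a b) : HasDerivAt (fun u => ∫ s in u..b, E s) (-E t) t :=
  intervalIntegral.integral_hasDerivAt_left
    ((hE.mono (Icc_subset_Icc_left ht.1.le)).intervalIntegrable_of_Icc ht.2.le)
    ((hE.mono Ioo_subset_Icc_self).stronglyMeasurableAtFilter isOpen_Ioo t ht)
    (hE.continuousAt (Icc_mem_nhds ht.1 ht.2))

end

theorem integral_le_integral_exp_mul_of_le_add_mul_integral {E f : ℝ → ℝ} {a b K : ℝ}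
    (hab : a ≤ b) (hE : ContinuousOn E (Icc a b)) (hf : ContinuousOn f (Icc a b))
    (h : ∀ t ∈ Ioo a b, E t ≤ f t + K * ∫ s in t..b, E s) :
    ∫ s in a..b, E s ≤ ∫ s in a..b, exp (K * (s - a)) * f s := by
  set g : ℝ → ℝ := fun s => exp (K * (s - a)) * f s
  have hexp : Continuous fun t => exp (K * (t - a)) := by fun_prop
  have hg : ContinuousOn g (Icc a b) := hexp.continuousOn.mul hf
  set ψ : ℝ → ℝ := fun t => exp (K * (t - a)) * (∫ s in t..b, E s) - ∫ s in t..b, g s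
  have hψ : MonotoneOn ψ (Icc a b) := by
    refine monotoneOn_of_hasDerivWithinAt_nonneg (convex_Icc a b)
      (f' := fun t => exp (K * (t - a)) * (f t + K * (∫ s in t..b, E s) - E t))
      ((hexp.continuousOn.mul hE.continuousOn_integral_left).sub hg.continuousOn_integral_left)
      (fun t ht => ?_) (fun t ht => ?_) <;> rw [interior_Icc] at ht
    · have hexp' : HasDerivAt (fun t => exp (K * (t - a))) (exp (K * (t - a)) * K) t := by
        simpa using (((hasDerivAt_id t).sub_const a).const_mul K).exp
      refine (((hexp'.mul (hE.hasDerivAt_integral_left ht)).sub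
        (hg.hasDerivAt_integral_left ht)).congr_deriv ?_).hasDerivWithinAt
      ring
    · exact mul_nonneg (exp_pos _).le (by linarith [h t ht])
  simpa [ψ, sub_nonpos] using hψ (left_mem_Icc.2 hab) (right_mem_Icc.2 hab) hab

theorem integral_exp_mul_mul_exp_le {a b K B C : ℝ} (hC : 0 ≤ C) (hKB : K < B) :
    ∫ s in a..b, exp (K * (s - a)) * (C * exp (-B * s)) ≤ C / (B - K) * exp (-B * a) := by
  have hBK : B - K ≠ 0 := (sub_pos.2 hKB).ne'
  have hF : ∀ s, HasDerivAt (fun s => -(C / (B - K)) * exp (K * (s - a) + -B * s))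
      (exp (K * (s - a)) * (C * exp (-B * s))) s := fun s => by
    refine ((((((hasDerivAt_id s).sub_const a).const_mul K).add
      ((hasDerivAt_id s).const_mul (-B))).exp).const_mul _).congr_deriv ?_
    simp only [Pi.add_apply, id, mul_one, exp_add]
    field_simp
    ring
  rw [intervalIntegral.integral_eq_sub_of_hasDerivAt (fun s _ => hF s)
    (Continuous.intervalIntegrable (by fun_prop) a b)]
  have : 0 ≤ C / (B - K) * exp (K * (b - a) + -B * b) :=
    mul_nonneg (div_nonneg hC (sub_pos.2 hKB).le) (exp_pos _).le
  simp only [sub_self, mul_zero, zero_add]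
  linarith

theorem backwards_gronwall_exponential_general
    (τ tfinal C B Cκ : ℝ) (E : ℝ → ℝ)
    (hC : 0 < C) (hCκ : 0 < Cκ) (hBC : Cκ < B)
    (hτ : τ ≤ tfinal)
    (hcont : ContinuousOn E (Icc τ tfinal))
    (hineq : ∀ t ∈ Icc τ tfinal,
      E t ≤ C * Real.exp (-B * t) + Cκ * ∫ s in t..tfinal, E s) :
    E τ ≤ C * (1 + Cκ / (B - Cκ)) * Real.exp (-B * τ) := by
  have hφ : ∫ s in τ..tfinal, E s ≤ C / (B - Cκ) * exp (-B * τ) :=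
    (integral_le_integral_exp_mul_of_le_add_mul_integral (f := fun s => C * exp (-B * s)) hτ
      hcont (by fun_prop) fun t ht => hineq t (Ioo_subset_Icc_self ht)).trans
      (integral_exp_mul_mul_exp_le hC.le hBC)
  calc E τ ≤ C * exp (-B * τ) + Cκ * ∫ s in τ..tfinal, E s := hineq τ (left_mem_Icc.2 hτ)
    _ ≤ C * exp (-B * τ) + Cκ * (C / (B - Cκ) * exp (-B * τ)) := by gcongr
    _ = C * (1 + Cκ / (B - Cκ)) * exp (-B * τ) := by
      field_simp [(sub_pos.2 hBC).ne']

theorem backwards_gronwall_exponential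
    (τ tfinal C B Cκ : ℝ) (E : ℝ → ℝ)
    (hC : 0 < C) (hB : 0 < B) (hCκ : 0 < Cκ) (hBC : Cκ < B)
    (hτ : τ ≤ tfinal)
    (hcont : ContinuousOn E (Icc τ tfinal))
    (hnonneg : ∀ t ∈ Icc τ tfinal, 0 ≤ E t)
    (hineq : ∀ t ∈ Icc τ tfinal,
      E t ≤ C * Real.exp (-B * t) + Cκ * ∫ s in t..tfinal, E s) :
    E τ ≤ C * (1 + Cκ / (B - Cκ)) * Real.exp (-B * τ) :=
  backwards_gronwall_exponential_general τ tfinal C B Cκ E hC hCκ hBC hτ hcont hineq
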